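/- arXiv:1902.00633 — 6 statements merged into one kernel-verified Lean document; each statement's English description precedes it below -/
import Mathlib

section
/- If two probability distributions p and q on {0,1}^K satisfy the same frequencies for all itemsets in an antimonotonic family F (i.e., p(B=1)=q(B=1) for every B in F), then for every itemset C in F and every binary vector t of length |C|, p(C=t)=q(C=t). -/
/-!
Splitting on the value of one attribute `i ∈ C` gives
`p(C \ {i} = t) = p(C = t[i := 0]) + p(C = t[i := 1])`. Hence `p(C = t)` with `t i = 0` is
determined by `p(C \ {i} = t)` and `p(C = t[i := 1])`, both of which have fewer zeros of `t` on
the itemset; when `t` has no zeros on `C`, `p(C = t)` is the frequency of `C`. Since `F` is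
closed under subsets, induction on the number of zeros stays inside `F`.
-/

open Finset

/-- A probability distribution on `{0,1}^K`. -/
def IsDist {Ω : Type*} [Fintype Ω] (p : Ω → ℝ) : Prop :=
  (∀ x, 0 ≤ p x) ∧ ∑ x, p x = 1

/-- The frequency `p(B = 1)` of an itemset `B`. -/
def freq {K : ℕ} (p : (Fin K → Bool) → ℝ) (B : Finset (Fin K)) : ℝ :=
  ∑ x : Fin K → Bool, if ∀ i ∈ B, x i = true then p x else 0

/-- The probability `p(C = t)`: all attributes in `C` take the values given by `t`. -/
def proj {K : ℕ} (p : (Fin K → Bool) → ℝ) (C : Finset (Fin K)) (t : Fin K → Bool) : ℝ :=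
  ∑ x : Fin K → Bool, if ∀ i ∈ C, x i = t i then p x else 0

lemma forall_mem_eq_update_iff {ι α : Type*} [DecidableEq ι] {C : Finset ι} {i : ι} (hi : i ∈ C)
    (x t : ι → α) (b : α) :
    (∀ j ∈ C, x j = Function.update t i b j) ↔ x i = b ∧ ∀ j ∈ C.erase i, x j = t j := by
  conv_lhs => rw [← insert_erase hi]
  simp +contextual [mem_erase, Function.update_of_ne]

lemma proj_eq_freq {K : ℕ} (p : (Fin K → Bool) → ℝ) {C : Finset (Fin K)} {t : Fin K → Bool}
    (ht : ∀ i ∈ C, t i = true) : proj p C t = freq p C :=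
  sum_congr rfl fun x _ => if_congr (forall₂_congr fun i hi => by rw [ht i hi]) rfl rfl

lemma proj_erase {K : ℕ} (p : (Fin K → Bool) → ℝ) {C : Finset (Fin K)} {i : Fin K}
    (hi : i ∈ C) (t : Fin K → Bool) :
    proj p (C.erase i) t =
      proj p C (Function.update t i false) + proj p C (Function.update t i true) := by
  simp only [proj, ← sum_add_distrib, forall_mem_eq_update_iff hi]
  refine sum_congr rfl fun x _ => ?_
  cases x i <;> simp

lemma card_filter_update_true_lt {ι : Type*} [DecidableEq ι] {C : Finset ι} {t : ι → Bool}
    {i : ι} (hi : i ∈ C) (hti : t i = false) :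
    #(C.filter fun j => Function.update t i true j = false) < #(C.filter fun j => t j = false) := by
  refine card_lt_card (ssubset_iff_of_subset ?_ |>.2 ⟨i, ?_, ?_⟩)
  · intro j
    by_cases hji : j = i <;> simp_all [Function.update_of_ne]
  · simp [hi, hti]
  · simp

theorem proj_eq_of_freq_eq {K : ℕ} {F : Set (Finset (Fin K))}
    (hF : ∀ B ∈ F, ∀ B' ⊆ B, B' ∈ F) {p q : (Fin K → Bool) → ℝ}
    (hfreq : ∀ B ∈ F, freq p B = freq q B) {C : Finset (Fin K)} (hC : C ∈ F)
    (t : Fin K → Bool) : proj p C t = proj q C t := by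
  by_cases h : ∀ i ∈ C, t i = true
  · rw [proj_eq_freq p h, proj_eq_freq q h, hfreq C hC]
  obtain ⟨i, hiC, hti⟩ : ∃ i ∈ C, t i = false := by simpa using h
  have h_erase := proj_eq_of_freq_eq hF hfreq (hF C hC _ (erase_subset i C)) t
  have h_true := proj_eq_of_freq_eq hF hfreq hC (Function.update t i true)
  rw [proj_erase p hiC, proj_erase q hiC, Function.update_eq_self_iff.2 hti.symm] at h_erase
  linarith
termination_by #(C.filter fun i => t i = false)
decreasing_by
  · rw [filter_erase]; exact card_erase_lt_of_mem (by simp [hiC, hti])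
  · exact card_filter_update_true_lt hiC hti

theorem projections_unique_general {K : ℕ} (F : Set (Finset (Fin K)))
    (hF : ∀ B ∈ F, ∀ B' ⊆ B, B' ∈ F)
    (p q : (Fin K → Bool) → ℝ)
    (hfreq : ∀ B ∈ F, freq p B = freq q B) :
    ∀ C ∈ F, ∀ t : Fin K → Bool, proj p C t = proj q C t :=
  fun _ hC t => proj_eq_of_freq_eq hF hfreq hC t

/-- If two distributions satisfy the same frequencies on an antimonotonic family `F`,
then they agree on `p(C = t)` for every `C ∈ F` and every binary vector `t`. -/
theorem projections_unique {K : ℕ} (F : Set (Finset (Fin K)))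
    (hF : ∀ B ∈ F, ∀ B' ⊆ B, B' ∈ F)
    (p q : (Fin K → Bool) → ℝ) (hp : IsDist p) (hq : IsDist q)
    (hfreq : ∀ B ∈ F, freq p B = freq q B) :
    ∀ C ∈ F, ∀ t : Fin K → Bool, proj p C t = proj q C t :=
  projections_unique_general F hF p q hfreq
end

section
/- Let R be a 3-CNF formula with L variables and M clauses, let p be the distribution on {0,1}^{L+M} defined by p(V=t,W=u) = 2^{-L} if u_i = C_i(t) for all i and 0 otherwise, and let F be the antimonotonic family generated by the itemsets {v_{j_1}, v_{j_2}, v_{j_3}, c_i} for each clause C_i with variables v_{j_1},v_{j_2},v_{j_3}. Then for any distribution q on {0,1}^{L+M} agreeing with p on the frequencies of all members of F: q(W=1) > 0 implies R is satisfiable. -/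
open Finset

/-- The truth value of clause `i` of the 3-CNF `R` under assignment `t`; a clause is a
triple of literals, each a pair (variable, sign). -/
def clauseVal {L M : ℕ} (R : Fin M → Fin 3 → Fin L × Bool)
    (t : Fin L → Bool) (i : Fin M) : Bool :=
  decide (∃ j : Fin 3, t (R i j).1 = (R i j).2)

/-- The construction distribution `p(V = t, W = u) = 2^{-L}` if `u = C(t)`, else `0`. -/
noncomputable def constr {L M : ℕ} (R : Fin M → Fin 3 → Fin L × Bool) :
    (Fin L → Bool) × (Fin M → Bool) → ℝ :=
  fun x => if x.2 = (fun i => clauseVal R x.1 i) then ((2 : ℝ) ^ L)⁻¹ else 0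

/-- The frequency `p(S = 1, T = 1)` for an itemset with variable-part `S` and
clause-part `T`. -/
def freq2 {L M : ℕ} (p : (Fin L → Bool) × (Fin M → Bool) → ℝ)
    (S : Finset (Fin L)) (T : Finset (Fin M)) : ℝ :=
  ∑ x : (Fin L → Bool) × (Fin M → Bool),
    if (∀ i ∈ S, x.1 i = true) ∧ (∀ j ∈ T, x.2 j = true) then p x else 0

/-- The set of variables appearing in clause `i`. -/
def clauseVars {L M : ℕ} (R : Fin M → Fin 3 → Fin L × Bool) (i : Fin M) :
    Finset (Fin L) :=
  Finset.image (fun j => (R i j).1) Finset.univ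

/-! Agreement with `p` on the frequencies of all subsets of a clause itemset
`{v_j₁, v_j₂, v_j₃, c_i}` determines, by inclusion–exclusion, the mass of every cell
`{(v_j₁, v_j₂, v_j₃) = u, c_i = 1}`. Under `p` such a cell is null when `u` falsifies `C_i`,
because `p` forces `c_i = C_i(t)`. Hence if `q` charges some point `(t, 1)`, the assignment `t`
satisfies every clause. -/

section Itemsets

variable {Ω κ : Type*} [Fintype Ω]

/-- `cylinderMass q E A ∅` is the frequency of the itemset `A` for the binary coordinates `E`. -/
def cylinderMass (q : Ω → ℝ) (E : κ → Ω → Bool) (A B : Finset κ) : ℝ :=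
  ∑ x with (∀ k ∈ A, E k x) ∧ ∀ k ∈ B, E k x = false, q x

variable (q : Ω → ℝ) (E : κ → Ω → Bool)

theorem sum_filter_forall_eq_cylinderMass (K : Finset κ) (s : κ → Bool)
    [DecidablePred fun x => ∀ k ∈ K, E k x = s k] :
    ∑ x with ∀ k ∈ K, E k x = s k, q x = cylinderMass q E {k ∈ K | s k} {k ∈ K | s k = false} := by
  refine sum_congr (filter_congr fun x _ => ?_) fun _ _ => rfl
  simp only [mem_filter, and_imp]
  refine ⟨fun h => ⟨fun k hk hs => (h k hk).trans hs, fun k hk hs => (h k hk).trans hs⟩,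
    fun h k hk => ?_⟩
  cases hs : s k
  · exact h.2 k hk hs
  · exact h.1 k hk hs

variable [DecidableEq κ]

theorem cylinderMass_eq_add_insert (A B : Finset κ) (k : κ) :
    cylinderMass q E A B = cylinderMass q E (insert k A) B + cylinderMass q E A (insert k B) := by
  simp only [cylinderMass, sum_filter, ← sum_add_distrib, forall_mem_insert]
  refine sum_congr rfl fun x _ => ?_
  cases E k x <;> simp

theorem cylinderMass_eq_of_freq_eq {p : Ω → ℝ} {K : Finset κ}
    (h : ∀ A ⊆ K, cylinderMass q E A ∅ = cylinderMass p E A ∅) {A B : Finset κ}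
    (hA : A ⊆ K) (hB : B ⊆ K) : cylinderMass q E A B = cylinderMass p E A B := by
  induction B using Finset.induction_on generalizing A with
  | empty => exact h A hA
  | insert k B _ ih =>
    have hk : k ∈ K := hB (mem_insert_self k B)
    have hB' : B ⊆ K := (subset_insert k B).trans hB
    have hq := cylinderMass_eq_add_insert q E A B k
    have hp := cylinderMass_eq_add_insert p E A B k
    have h₁ := ih hA hB'
    have h₂ := ih (insert_subset hk hA) hB'
    linarith

theorem sum_filter_forall_eq_of_freq_eq {p : Ω → ℝ} {K : Finset κ}
    (h : ∀ A ⊆ K, cylinderMass q E A ∅ = cylinderMass p E A ∅) (s : κ → Bool)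
    [DecidablePred fun x => ∀ k ∈ K, E k x = s k] :
    ∑ x with ∀ k ∈ K, E k x = s k, q x = ∑ x with ∀ k ∈ K, E k x = s k, p x := by
  rw [sum_filter_forall_eq_cylinderMass, sum_filter_forall_eq_cylinderMass]
  exact cylinderMass_eq_of_freq_eq q E h (filter_subset _ _) (filter_subset _ _)

end Itemsets

section ThreeSat

variable {L M : ℕ}

/-- Itemsets live on `Fin L ⊕ Fin M`: `inl j` is the variable coordinate `v_j`, `inr i` the
clause coordinate `c_i`. -/
def itemCoord (k : Fin L ⊕ Fin M) (x : (Fin L → Bool) × (Fin M → Bool)) : Bool :=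
  Sum.elim x.1 x.2 k

theorem cylinderMass_itemCoord_eq_freq2 (q : (Fin L → Bool) × (Fin M → Bool) → ℝ)
    (A : Finset (Fin L ⊕ Fin M)) : cylinderMass q itemCoord A ∅ = freq2 q A.toLeft A.toRight := by
  rw [cylinderMass, freq2, sum_filter]
  refine sum_congr rfl fun x _ => ?_
  congr 1
  simp [itemCoord, Sum.forall]

theorem clauseVal_congr (R : Fin M → Fin 3 → Fin L × Bool) {t t' : Fin L → Bool} {i : Fin M}
    (h : ∀ v ∈ clauseVars R i, t v = t' v) : clauseVal R t i = clauseVal R t' i := by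
  simp only [clauseVal]
  congr! 3 with j
  rw [h _ (mem_image_of_mem _ (mem_univ j))]

theorem constr_eq_zero_of_clauseVal_eq_false (R : Fin M → Fin 3 → Fin L × Bool)
    {t : Fin L → Bool} {i : Fin M} (h : clauseVal R t i = false)
    {x : (Fin L → Bool) × (Fin M → Bool)}
    (hx : ∀ k ∈ (clauseVars R i).disjSum {i}, itemCoord k x = Sum.elim t (fun _ => true) k) :
    constr R x = 0 := by
  refine if_neg fun hx₂ => ?_
  simp only [Sum.forall, inl_mem_disjSum, inr_mem_disjSum, mem_singleton, forall_eq, itemCoord,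
    Sum.elim_inl, Sum.elim_inr] at hx
  simpa [hx.2, clauseVal_congr R hx.1, h] using congrFun hx₂ i

theorem exists_pos_of_freq2_pos {q : (Fin L → Bool) × (Fin M → Bool) → ℝ}
    {S : Finset (Fin L)} {T : Finset (Fin M)} (h : 0 < freq2 q S T) :
    ∃ x, (∀ v ∈ S, x.1 v = true) ∧ (∀ j ∈ T, x.2 j = true) ∧ 0 < q x := by
  have h₀ : ∑ _x : (Fin L → Bool) × (Fin M → Bool), (0 : ℝ) < freq2 q S T := by
    rwa [sum_const_zero]
  obtain ⟨x, -, hx⟩ := exists_lt_of_sum_lt h₀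
  split_ifs at hx with hS
  · exact ⟨x, hS.1, hS.2, hx⟩
  · exact (lt_irrefl 0 hx).elim

end ThreeSat

/-- If `q` agrees with the construction distribution `p` on the frequencies of the
antimonotonic family generated by the clause itemsets, then `q(W=1) > 0` implies
that `R` is satisfiable. -/
theorem positive_freq_implies_sat {L M : ℕ} (R : Fin M → Fin 3 → Fin L × Bool)
    (q : (Fin L → Bool) × (Fin M → Bool) → ℝ) (hq : IsDist q)
    (hagree : ∀ (i : Fin M) (S : Finset (Fin L)) (T : Finset (Fin M)),
      S ⊆ clauseVars R i → T ⊆ {i} → freq2 q S T = freq2 (constr R) S T)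
    (hpos : 0 < freq2 q ∅ Finset.univ) :
    ∃ t : Fin L → Bool, ∀ i, clauseVal R t i = true := by
  obtain ⟨x, -, hW, hx⟩ := exists_pos_of_freq2_pos hpos
  refine ⟨x.1, fun i => ?_⟩
  by_contra hunsat
  have hfreq : ∀ A ⊆ (clauseVars R i).disjSum {i},
      cylinderMass q itemCoord A ∅ = cylinderMass (constr R) itemCoord A ∅ := by
    intro A hA
    rw [cylinderMass_itemCoord_eq_freq2, cylinderMass_itemCoord_eq_freq2]
    exact hagree i _ _ (subset_disjSum.1 hA).1 (subset_disjSum.1 hA).2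
  have hcell := sum_filter_forall_eq_of_freq_eq q itemCoord hfreq (Sum.elim x.1 fun _ => true)
  rw [sum_eq_zero fun y hy => constr_eq_zero_of_clauseVal_eq_false R
    (Bool.eq_false_iff.2 hunsat) (mem_filter.1 hy).2] at hcell
  refine hx.not_ge (le_trans (single_le_sum (fun y _ => hq.1 y) ?_) hcell.le)
  simp [itemCoord, Sum.forall, hW]
end

section
/- Let R be a 3-CNF formula with L variables. With p and F as in the standard construction, if R is satisfied by truth assignment t then the maximal frequency f of the itemset W over all distributions satisfying the F-frequencies of p satisfies f ≥ 2^{-L} > 0. -/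
open Finset

/-! The construction distribution is itself feasible, and when `t` satisfies `R` it puts mass
`2^{-L}` on the point `(t, (1,…,1))`, which lies in the itemset `W`. -/

lemma constr_nonneg {L M : ℕ} (R : Fin M → Fin 3 → Fin L × Bool)
    (x : (Fin L → Bool) × (Fin M → Bool)) : 0 ≤ constr R x := by
  unfold constr; split <;> positivity

lemma sum_constr_eq_inv_two_pow {L M : ℕ} (R : Fin M → Fin 3 → Fin L × Bool)
    (t : Fin L → Bool) : ∑ u : Fin M → Bool, constr R (t, u) = ((2 : ℝ) ^ L)⁻¹ := by
  rw [Finset.sum_eq_single (fun i => clauseVal R t i)]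
  · simp [constr]
  · intro u _ hu; simp [constr, hu]
  · simp

lemma constr_isDist {L M : ℕ} (R : Fin M → Fin 3 → Fin L × Bool) :
    IsDist (constr R) := by
  refine ⟨constr_nonneg R, ?_⟩
  rw [Fintype.sum_prod_type]
  simp only [sum_constr_eq_inv_two_pow, Finset.sum_const, card_univ, Fintype.card_fun,
    Fintype.card_bool, Fintype.card_fin, nsmul_eq_mul]
  push_cast
  exact mul_inv_cancel₀ (by positivity)

lemma constr_of_satisfies {L M : ℕ} (R : Fin M → Fin 3 → Fin L × Bool)
    (t : Fin L → Bool) (ht : ∀ i, clauseVal R t i = true) :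
    constr R (t, fun _ => true) = ((2 : ℝ) ^ L)⁻¹ := by
  simp [constr, funext fun i => (ht i).symm]

lemma freq2_le_one {L M : ℕ} {q : (Fin L → Bool) × (Fin M → Bool) → ℝ} (hq : IsDist q)
    (S : Finset (Fin L)) (T : Finset (Fin M)) : freq2 q S T ≤ 1 := by
  rw [← hq.2]
  exact Finset.sum_le_sum fun x _ => by split <;> [exact le_rfl; exact hq.1 x]

lemma le_freq2 {L M : ℕ} {p : (Fin L → Bool) × (Fin M → Bool) → ℝ} (hp : ∀ x, 0 ≤ p x)
    {S : Finset (Fin L)} {T : Finset (Fin M)} {x : (Fin L → Bool) × (Fin M → Bool)}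
    (hS : ∀ i ∈ S, x.1 i = true) (hT : ∀ j ∈ T, x.2 j = true) : p x ≤ freq2 p S T := by
  unfold freq2
  rw [← Finset.sum_filter]
  exact Finset.single_le_sum (fun y _ => hp y)
    (Finset.mem_filter.2 ⟨Finset.mem_univ x, hS, hT⟩)

lemma bddAbove_freq2_of_isDist {L M : ℕ}
    (P : ((Fin L → Bool) × (Fin M → Bool) → ℝ) → Prop)
    (S : Finset (Fin L)) (T : Finset (Fin M)) :
    BddAbove {f : ℝ | ∃ q, IsDist q ∧ P q ∧ freq2 q S T = f} := by
  refine ⟨1, ?_⟩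
  rintro f ⟨q, hq, -, rfl⟩
  exact freq2_le_one hq S T

/-- If `R` is satisfied by `t`, then the maximal frequency of the itemset `W` over all
distributions satisfying the construction frequencies is at least `2^{-L} > 0`. -/
theorem sat_implies_max_freq_pos {L M : ℕ} (R : Fin M → Fin 3 → Fin L × Bool)
    (t : Fin L → Bool) (ht : ∀ i, clauseVal R t i = true) :
    ((2 : ℝ) ^ L)⁻¹ ≤
      sSup {f : ℝ | ∃ q : (Fin L → Bool) × (Fin M → Bool) → ℝ, IsDist q ∧
        (∀ (i : Fin M) (S : Finset (Fin L)) (T : Finset (Fin M)),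
          S ⊆ clauseVars R i → T ⊆ {i} → freq2 q S T = freq2 (constr R) S T) ∧
        freq2 q ∅ Finset.univ = f} ∧
    (0 : ℝ) < ((2 : ℝ) ^ L)⁻¹ := by
  refine ⟨?_, by positivity⟩
  have hsat : ((2 : ℝ) ^ L)⁻¹ ≤ freq2 (constr R) ∅ Finset.univ := by
    rw [← constr_of_satisfies R t ht]
    exact le_freq2 (constr_nonneg R) (by simp) (by simp)
  exact hsat.trans <| le_csSup (bddAbove_freq2_of_isDist _ _ _)
    ⟨constr R, constr_isDist R, fun _ _ _ _ _ => rfl, rfl⟩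
end

section
/- Let p and q be distributions on a finite set satisfying the same frequencies for an antimonotonic family F, and suppose under p (hence under q, by the agreement of projected distributions on members of F) each coordinate in W is determined by the coordinates in V. If p's marginal on V is uniform and q maximizes entropy among all distributions satisfying the F-frequencies, then q = p. -/
open Finset

noncomputable def entropy {Ω : Type*} [Fintype Ω] (p : Ω → ℝ) : ℝ :=
  ∑ x, Real.negMulLog (p x)

/-!
Under `q` the `W`-part is the function `C` of the `V`-part, so `q` is carried by the graph of `C`
and its entropy is that of its `V`-marginal `t ↦ q (t, C t)`; the same holds for `p`, whose
marginal is uniform. Since `q` maximizes entropy and `p` is feasible, the marginal of `q` has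
entropy at least that of the uniform distribution, hence is uniform by the equality case of
Jensen's inequality for the strictly concave `negMulLog`. Two distributions carried by the graph
of `C` with the same marginal coincide.
-/

theorem sum_fiber_eq_apply_graph {α β : Type*} [Fintype β] {C : α → β} {r : α × β → ℝ}
    (hr : ∀ t u, u ≠ C t → r (t, u) = 0) (t : α) : ∑ u, r (t, u) = r (t, C t) :=
  Finset.sum_eq_single (C t) (fun u _ hu => hr t u hu) (by simp)

section Graph

variable {α β : Type*} [Fintype α] [Fintype β] {C : α → β} {r : α × β → ℝ}

theorem sum_comp_eq_sum_graph (hr : ∀ t u, u ≠ C t → r (t, u) = 0) (φ : ℝ → ℝ) (hφ : φ 0 = 0) :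
    ∑ x, φ (r x) = ∑ t, φ (r (t, C t)) := by
  rw [Fintype.sum_prod_type]
  refine Finset.sum_congr rfl fun t _ => ?_
  exact Finset.sum_eq_single (C t) (fun u _ hu => by rw [hr t u hu, hφ]) (by simp)

theorem entropy_eq_entropy_graph (hr : ∀ t u, u ≠ C t → r (t, u) = 0) :
    entropy r = entropy fun t => r (t, C t) :=
  sum_comp_eq_sum_graph hr _ Real.negMulLog_zero

theorem IsDist.graph (hd : IsDist r) (hr : ∀ t u, u ≠ C t → r (t, u) = 0) :
    IsDist fun t => r (t, C t) :=
  ⟨fun _ => hd.1 _, (sum_comp_eq_sum_graph hr id rfl).symm.trans hd.2⟩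

end Graph

theorem IsDist.eq_uniform_of_entropy_le {α : Type*} [Fintype α] {f : α → ℝ} (hf : IsDist f)
    (h : entropy (fun _ : α => (Fintype.card α : ℝ)⁻¹) ≤ entropy f) :
    f = fun _ => (Fintype.card α : ℝ)⁻¹ := by
  set w : ℝ := (Fintype.card α : ℝ)⁻¹
  have hα : Nonempty α := by
    by_contra hα
    simpa [not_nonempty_iff.mp hα] using hf.2
  have hw_pos : ∀ a ∈ (univ : Finset α), 0 < w := fun _ _ => by positivity
  have hw_sum : ∑ _a : α, w = 1 := by simp [w]
  have hmem : ∀ a ∈ (univ : Finset α), f a ∈ Set.Ici (0 : ℝ) := fun a _ => hf.1 a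
  have hmean : ∑ a, w • f a = w := by simp only [smul_eq_mul, ← mul_sum, hf.2, mul_one]
  have hjensen : Real.negMulLog (∑ a, w • f a) ≤ ∑ a, w • Real.negMulLog (f a) := by
    calc Real.negMulLog (∑ a, w • f a) = w * entropy (fun _ : α => w) := by
          rw [hmean]; simp [entropy, w]
      _ ≤ w * entropy f := mul_le_mul_of_nonneg_left h (by positivity)
      _ = ∑ a, w • Real.negMulLog (f a) := by simp only [entropy, mul_sum, smul_eq_mul]
  have hconst := (Real.strictConcaveOn_negMulLog.map_sum_eq_iff hw_pos hw_sum hmem).mp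
    (le_antisymm (Real.strictConcaveOn_negMulLog.concaveOn.le_map_sum
      (fun a ha => (hw_pos a ha).le) hw_sum hmem) hjensen).symm
  exact funext fun a => (hconst a (mem_univ a)).trans hmean

theorem maxent_is_construction_general {L M : ℕ}
    (F : Set (Finset (Fin L) × Finset (Fin M)))
    (p q : (Fin L → Bool) × (Fin M → Bool) → ℝ)
    (hp : IsDist p) (hq : IsDist q)
    (C : (Fin L → Bool) → (Fin M → Bool))
    (hpC : ∀ t u, u ≠ C t → p (t, u) = 0)
    (hqC : ∀ t u, u ≠ C t → q (t, u) = 0)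
    (hunif : ∀ t : Fin L → Bool, (∑ u : Fin M → Bool, p (t, u)) = ((2 : ℝ) ^ L)⁻¹)
    (hmax : ∀ q' : (Fin L → Bool) × (Fin M → Bool) → ℝ, IsDist q' →
      (∀ B ∈ F, freq2 q' B.1 B.2 = freq2 p B.1 B.2) → entropy q' ≤ entropy q) :
    q = p := by
  have hp_graph : (fun t => p (t, C t)) = fun _ => (Fintype.card (Fin L → Bool) : ℝ)⁻¹ := by
    funext t
    rw [← sum_fiber_eq_apply_graph hpC, hunif]
    simp
  have hq_graph : (fun t => q (t, C t)) = fun _ => (Fintype.card (Fin L → Bool) : ℝ)⁻¹ := by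
    refine (hq.graph hqC).eq_uniform_of_entropy_le ?_
    rw [← hp_graph, ← entropy_eq_entropy_graph hpC, ← entropy_eq_entropy_graph hqC]
    exact hmax p hp fun _ _ => rfl
  funext ⟨t, u⟩
  by_cases hu : u = C t
  · subst hu
    exact (congrFun hq_graph t).trans (congrFun hp_graph t).symm
  · rw [hqC t u hu, hpC t u hu]

/-- If `p` and `q` satisfy the same frequencies for an antimonotonic family `F`, under
both the `W`-coordinates are the deterministic function `C` of the `V`-coordinates,
`p`'s marginal on `V` is uniform, and `q` maximizes entropy among distributions
satisfying the `F`-frequencies, then `q = p`. -/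
theorem maxent_is_construction {L M : ℕ}
    (F : Set (Finset (Fin L) × Finset (Fin M)))
    (hF : ∀ B ∈ F, ∀ S' ⊆ B.1, ∀ T' ⊆ B.2, (S', T') ∈ F)
    (p q : (Fin L → Bool) × (Fin M → Bool) → ℝ)
    (hp : IsDist p) (hq : IsDist q)
    (C : (Fin L → Bool) → (Fin M → Bool))
    (hpC : ∀ t u, u ≠ C t → p (t, u) = 0)
    (hqC : ∀ t u, u ≠ C t → q (t, u) = 0)
    (hunif : ∀ t : Fin L → Bool, (∑ u : Fin M → Bool, p (t, u)) = ((2 : ℝ) ^ L)⁻¹)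
    (hagree : ∀ B ∈ F, freq2 q B.1 B.2 = freq2 p B.1 B.2)
    (hmax : ∀ q' : (Fin L → Bool) × (Fin M → Bool) → ℝ, IsDist q' →
      (∀ B ∈ F, freq2 q' B.1 B.2 = freq2 p B.1 B.2) → entropy q' ≤ entropy q) :
    q = p :=
  maxent_is_construction_general F p q hp hq C hpC hqC hunif hmax
end

section
/- Consider the 3-SAT construction extended with an extra attribute c_0: frequencies require q(c_0=1)=2^{-L} and q(c_0=1, c_i=1)=2^{-L} for every clause-attribute c_i. Then any distribution q satisfying these constraints (together with the original F-frequencies) satisfies q(W=1) ≥ 2^{-L} > 0, and hence the formula R is satisfiable. -/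
open Finset

/-- auxiliary "exact pattern" sum -/
noncomputable def Fsum {L M : ℕ} (i : Fin M)
    (r : (Fin L → Bool) × (Fin M → Bool) → ℝ) (S U : Finset (Fin L)) : ℝ :=
  ∑ x : (Fin L → Bool) × (Fin M → Bool),
    if (∀ v ∈ S, x.1 v = true) ∧ (∀ v ∈ U, x.1 v = false) ∧ x.2 i = true
    then r x else 0

lemma Fsum_split {L M : ℕ} (i : Fin M)
    (r : (Fin L → Bool) × (Fin M → Bool) → ℝ) (S U : Finset (Fin L)) (w : Fin L) :
    Fsum i r S U = Fsum i r S (insert w U) + Fsum i r (insert w S) U := by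
  unfold Fsum
  rw [← Finset.sum_add_distrib]
  refine Finset.sum_congr rfl fun x _ => ?_
  rcases Bool.eq_false_or_eq_true (x.1 w) with hw | hw <;>
    simp [Finset.forall_mem_insert, hw]

lemma Fsum_eq {L M : ℕ} (i : Fin M) (R : Fin M → Fin 3 → Fin L × Bool)
    (p : (Fin L → Bool) × (Fin M → Bool) → ℝ)
    (hag : ∀ S ⊆ clauseVars R i, freq2 p S {i} = freq2 (constr R) S {i}) :
    ∀ U ⊆ clauseVars R i, ∀ S ⊆ clauseVars R i,
      Fsum i p S U = Fsum i (constr R) S U := by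
  intro U
  induction U using Finset.induction_on with
  | empty =>
    intro _ S hS
    have base : ∀ r : (Fin L → Bool) × (Fin M → Bool) → ℝ,
        Fsum i r S ∅ = freq2 r S {i} := by
      intro r
      unfold Fsum freq2
      refine Finset.sum_congr rfl fun x _ => ?_
      refine if_congr ?_ rfl rfl
      simp
    rw [base, base, hag S hS]
  | @insert w U hwU ih =>
    intro hU S hS
    have hU' : U ⊆ clauseVars R i := fun v hv => hU (Finset.mem_insert_of_mem hv)
    have hw : w ∈ clauseVars R i := hU (Finset.mem_insert_self w U)
    have hS' : insert w S ⊆ clauseVars R i := Finset.insert_subset hw hS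
    have e1 := Fsum_split i p S U w
    have e2 := Fsum_split i (constr R) S U w
    have i1 := ih hU' S hS
    have i2 := ih hU' (insert w S) hS'
    linarith


/-- Consistency of the extended construction (with extra attribute `c_0`) forces
`q(W=1) ≥ 2^{-L} > 0` and hence the formula `R` is satisfiable. -/
theorem consistency_implies_sat {L M : ℕ} (R : Fin M → Fin 3 → Fin L × Bool)
    (q : ((Fin L → Bool) × (Fin M → Bool)) × Bool → ℝ) (hq : IsDist q)
    (hc0 : (∑ x : ((Fin L → Bool) × (Fin M → Bool)) × Bool,
        if x.2 = true then q x else 0) = ((2 : ℝ) ^ L)⁻¹)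
    (hc0i : ∀ i : Fin M, (∑ x : ((Fin L → Bool) × (Fin M → Bool)) × Bool,
        if x.2 = true ∧ x.1.2 i = true then q x else 0) = ((2 : ℝ) ^ L)⁻¹)
    (hagree : ∀ (i : Fin M) (S : Finset (Fin L)) (T : Finset (Fin M)),
      S ⊆ clauseVars R i → T ⊆ {i} →
      freq2 (fun y => q (y, true) + q (y, false)) S T = freq2 (constr R) S T) :
    ((2 : ℝ) ^ L)⁻¹ ≤
        (∑ x : ((Fin L → Bool) × (Fin M → Bool)) × Bool,
          if ∀ i : Fin M, x.1.2 i = true then q x else 0) ∧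
      (0 : ℝ) < ((2 : ℝ) ^ L)⁻¹ ∧
      ∃ t : Fin L → Bool, ∀ i, clauseVal R t i = true := by
  have hpos : (0 : ℝ) < ((2 : ℝ) ^ L)⁻¹ := by positivity
  -- q(c0=1, ci=0) = 0
  have hZ : ∀ (i : Fin M) x, x.2 = true → x.1.2 i = false → q x = 0 := by
    intro i x hx2 hxi
    have hsum : ∑ y : ((Fin L → Bool) × (Fin M → Bool)) × Bool,
        ((if y.2 = true then q y else 0)
          - (if y.2 = true ∧ y.1.2 i = true then q y else 0)) = 0 := by
      rw [Finset.sum_sub_distrib, hc0, hc0i i]; ring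
    have hnn : ∀ y ∈ (univ : Finset (((Fin L → Bool) × (Fin M → Bool)) × Bool)),
        0 ≤ (if y.2 = true then q y else 0)
          - (if y.2 = true ∧ y.1.2 i = true then q y else 0) := by
      intro y _
      by_cases h1 : y.2 = true
      · by_cases h2 : y.1.2 i = true
        · simp [h1, h2]
        · simp [h1, h2, hq.1 y]
      · simp [h1]
    have hx := (Finset.sum_eq_zero_iff_of_nonneg hnn).mp hsum x (mem_univ x)
    rw [if_pos hx2, if_neg (by simp [hxi])] at hx
    linarith
  -- first claim
  have h1 : ((2 : ℝ) ^ L)⁻¹ ≤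
      ∑ x : ((Fin L → Bool) × (Fin M → Bool)) × Bool,
        if ∀ i : Fin M, x.1.2 i = true then q x else 0 := by
    rw [← hc0]
    refine Finset.sum_le_sum fun x _ => ?_
    by_cases h2 : x.2 = true
    · by_cases hall : ∀ i : Fin M, x.1.2 i = true
      · simp [h2, hall]
      · push_neg at hall
        obtain ⟨i, hi⟩ := hall
        have hif : x.1.2 i = false := by simpa using hi
        rw [if_pos h2, hZ i x h2 hif]
        split <;> simp [hq.1 x]
    · rw [if_neg h2]
      split
      · exact hq.1 x
      · exact le_refl 0
  refine ⟨h1, hpos, ?_⟩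
  -- get a point with positive mass and all clause bits true
  have hlt : (0 : ℝ) < ∑ x : ((Fin L → Bool) × (Fin M → Bool)) × Bool,
      if ∀ i : Fin M, x.1.2 i = true then q x else 0 := lt_of_lt_of_le hpos h1
  obtain ⟨x, hx⟩ : ∃ x : ((Fin L → Bool) × (Fin M → Bool)) × Bool,
      (0:ℝ) < if ∀ i : Fin M, x.1.2 i = true then q x else 0 := by
    by_contra hcon
    push_neg at hcon
    have : ∑ x : ((Fin L → Bool) × (Fin M → Bool)) × Bool,
        (if ∀ i : Fin M, x.1.2 i = true then q x else 0) ≤ 0 :=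
      Finset.sum_nonpos fun x _ => hcon x
    linarith
  have hall : ∀ i : Fin M, x.1.2 i = true := by
    by_contra hc
    rw [if_neg hc] at hx
    exact lt_irrefl 0 hx
  rw [if_pos hall] at hx
  set p : (Fin L → Bool) × (Fin M → Bool) → ℝ :=
    fun y => q (y, true) + q (y, false) with hp
  have hpnn : ∀ y, 0 ≤ p y := fun y => add_nonneg (hq.1 _) (hq.1 _)
  have hpx : 0 < p x.1 := by
    have h0 : 0 < q (x.1, x.2) := by rw [Prod.mk.eta]; exact hx
    show 0 < q (x.1, true) + q (x.1, false)
    rcases Bool.eq_false_or_eq_true x.2 with h2 | h2 <;> rw [h2] at h0 <;>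
      linarith [hq.1 (x.1, true), hq.1 (x.1, false)]
  set t : Fin L → Bool := x.1.1 with ht
  refine ⟨t, fun i => ?_⟩
  by_contra hcv
  have hcvf : clauseVal R t i = false := by
    cases h : clauseVal R t i
    · rfl
    · exact absurd h hcv
  -- filters
  set D := clauseVars R i with hD
  set T1 : Finset (Fin L) := D.filter (fun v => t v = true) with hT1
  set T0 : Finset (Fin L) := D.filter (fun v => t v = false) with hT0
  have hag : ∀ S ⊆ clauseVars R i, freq2 p S {i} = freq2 (constr R) S {i} :=
    fun S hS => hagree i S {i} hS (Finset.Subset.refl _)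
  have hkey : Fsum i p T1 T0 = Fsum i (constr R) T1 T0 :=
    Fsum_eq i R p hag T0 (Finset.filter_subset _ _) T1 (Finset.filter_subset _ _)
  -- RHS = 0
  have hrhs : Fsum i (constr R) T1 T0 = 0 := by
    unfold Fsum
    refine Finset.sum_eq_zero fun z _ => ?_
    split_ifs with h
    · obtain ⟨hS, hU, hi2⟩ := h
      unfold constr
      split_ifs with hz
      · exfalso
        have hcz : clauseVal R z.1 i = true := by
          have := congrFun hz i
          rw [this] at hi2
          exact hi2
        have hvars : ∀ j : Fin 3, z.1 (R i j).1 = t (R i j).1 := by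
          intro j
          have hv : (R i j).1 ∈ D := by
            rw [hD]; unfold clauseVars
            exact Finset.mem_image_of_mem _ (mem_univ j)
          cases hvt : t (R i j).1 with
          | false => exact hU _ (Finset.mem_filter.mpr ⟨hv, hvt⟩)
          | true => exact hS _ (Finset.mem_filter.mpr ⟨hv, hvt⟩)
        have heq : clauseVal R z.1 i = clauseVal R t i := by
          unfold clauseVal
          rw [decide_eq_decide]
          constructor
          · rintro ⟨j, hj⟩; exact ⟨j, by rw [← hvars j]; exact hj⟩
          · rintro ⟨j, hj⟩; exact ⟨j, by rw [hvars j]; exact hj⟩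
        rw [heq, hcvf] at hcz
        exact Bool.false_ne_true hcz
      · rfl
    · rfl
  -- LHS > 0
  have hlhs : 0 < Fsum i p T1 T0 := by
    unfold Fsum
    have hmem : (0:ℝ) < if (∀ v ∈ T1, x.1.1 v = true) ∧ (∀ v ∈ T0, x.1.1 v = false)
        ∧ x.1.2 i = true then p x.1 else 0 := by
      rw [if_pos]
      · exact hpx
      · refine ⟨?_, ?_, hall i⟩
        · intro v hv
          exact (Finset.mem_filter.mp hv).2
        · intro v hv
          exact (Finset.mem_filter.mp hv).2
    calc (0:ℝ) < _ := hmem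
      _ ≤ _ := Finset.single_le_sum (f := fun z : (Fin L → Bool) × (Fin M → Bool) =>
          if (∀ v ∈ T1, z.1 v = true) ∧ (∀ v ∈ T0, z.1 v = false) ∧ z.2 i = true
          then p z else 0)
          (fun z _ => by split; exacts [hpnn z, le_refl 0]) (mem_univ x.1)
  rw [hkey, hrhs] at hlhs
  exact lt_irrefl 0 hlhs
end

section
/- Let q be a distribution on {0,1}^{L+M} agreeing with the construction distribution p on the frequencies of the antimonotonic family F generated by the clause itemsets. Then for every assignment t ∈ {0,1}^L not satisfying the 3-CNF formula R, q(V=t, W=1) = 0. -/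
open Finset

/-- Mixed-value frequency: probability that all of `A` are true, all of `F` are false,
and clause indicator `i₀` is true. -/
noncomputable def mix {L M : ℕ} (p : (Fin L → Bool) × (Fin M → Bool) → ℝ)
    (A F : Finset (Fin L)) (i₀ : Fin M) : ℝ :=
  ∑ x : (Fin L → Bool) × (Fin M → Bool),
    if (∀ i ∈ A, x.1 i = true) ∧ (∀ i ∈ F, x.1 i = false) ∧ x.2 i₀ = true then p x else 0

lemma mix_empty {L M : ℕ} (p : (Fin L → Bool) × (Fin M → Bool) → ℝ)
    (A : Finset (Fin L)) (i₀ : Fin M) : mix p A ∅ i₀ = freq2 p A {i₀} := by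
  unfold mix freq2
  refine Finset.sum_congr rfl fun x _ => if_congr ?_ rfl rfl
  simp

lemma mix_insert {L M : ℕ} (p : (Fin L → Bool) × (Fin M → Bool) → ℝ)
    (A F' : Finset (Fin L)) (j : Fin L) (i₀ : Fin M) (hjA : j ∉ A) :
    mix p A (insert j F') i₀ = mix p A F' i₀ - mix p (insert j A) F' i₀ := by
  unfold mix
  rw [← Finset.sum_sub_distrib]
  refine Finset.sum_congr rfl fun x _ => ?_
  by_cases hj : x.1 j = true <;>
    simp only [Finset.forall_mem_insert, hj, Bool.true_eq_false, false_and, and_false,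
      true_and, if_false, Bool.false_eq_true] <;>
    split_ifs <;> simp_all <;> ring

lemma mix_agree {L M : ℕ} (R : Fin M → Fin 3 → Fin L × Bool)
    (q : (Fin L → Bool) × (Fin M → Bool) → ℝ) (i₀ : Fin M)
    (hagree : ∀ (S : Finset (Fin L)), S ⊆ clauseVars R i₀ →
      freq2 q S {i₀} = freq2 (constr R) S {i₀}) :
    ∀ F A : Finset (Fin L), Disjoint A F → A ∪ F ⊆ clauseVars R i₀ →
      mix q A F i₀ = mix (constr R) A F i₀ := by
  intro F
  induction F using Finset.induction_on with
  | empty =>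
      intro A _ hsub
      rw [mix_empty, mix_empty]
      exact hagree A (by simpa using hsub)
  | insert _ _ hjs ih =>
      rename_i j s
      intro A hdisj hsub
      have hjA : j ∉ A := fun h => (Finset.disjoint_left.mp hdisj h) (Finset.mem_insert_self j s)
      have hds : Disjoint A s := hdisj.mono_right (Finset.subset_insert j s)
      have hds' : Disjoint (insert j A) s := by
        rw [Finset.disjoint_left]
        intro a ha has
        rcases Finset.mem_insert.mp ha with rfl | ha
        · exact hjs has
        · exact Finset.disjoint_left.mp hds ha has
      have hsub1 : A ∪ s ⊆ clauseVars R i₀ := by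
        refine subset_trans ?_ hsub
        exact Finset.union_subset_union (le_refl A) (Finset.subset_insert j s)
      have hsub2 : insert j A ∪ s ⊆ clauseVars R i₀ := by
        intro a ha
        apply hsub
        rcases Finset.mem_union.mp ha with ha | ha
        · rcases Finset.mem_insert.mp ha with rfl | ha
          · exact Finset.mem_union_right _ (Finset.mem_insert_self _ s)
          · exact Finset.mem_union_left _ ha
        · exact Finset.mem_union_right _ (Finset.mem_insert_of_mem ha)
      rw [mix_insert q A s j i₀ hjA, mix_insert (constr R) A s j i₀ hjA,
        ih A hds hsub1, ih (insert j A) hds' hsub2]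

/-- If `q` agrees with the construction distribution on the frequencies of the
antimonotonic family generated by the clause itemsets, then `q(V = t, W = 1) = 0`
for every non-satisfying assignment `t`. -/
theorem nonsat_assignment_zero {L M : ℕ} (R : Fin M → Fin 3 → Fin L × Bool)
    (q : (Fin L → Bool) × (Fin M → Bool) → ℝ) (hq : IsDist q)
    (hagree : ∀ (i : Fin M) (S : Finset (Fin L)) (T : Finset (Fin M)),
      S ⊆ clauseVars R i → T ⊆ {i} → freq2 q S T = freq2 (constr R) S T) :
    ∀ t : Fin L → Bool, ¬ (∀ i, clauseVal R t i = true) →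
      (∑ x : (Fin L → Bool) × (Fin M → Bool),
        if x.1 = t ∧ (∀ i, x.2 i = true) then q x else 0) = 0 := by
  intro t ht
  push_neg at ht
  obtain ⟨i₀, hi₀⟩ := ht
  have hi₀' : clauseVal R t i₀ = false := by simpa using hi₀
  set G := clauseVars R i₀ with hG
  set A := G.filter (fun i => t i = true) with hA
  set F := G.filter (fun i => t i = false) with hF
  have hdisj : Disjoint A F := by
    rw [Finset.disjoint_left]
    intro a ha haF
    rw [hA, Finset.mem_filter] at ha
    rw [hF, Finset.mem_filter] at haF
    rw [ha.2] at haF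
    simp at haF
  have hunion : A ∪ F = G := by
    ext a
    simp only [hA, hF, Finset.mem_union, Finset.mem_filter]
    constructor
    · rintro (h | h) <;> exact h.1
    · intro h
      cases htj : t a
      · exact Or.inr ⟨h, rfl⟩
      · exact Or.inl ⟨h, rfl⟩
  have hc0 : mix (constr R) A F i₀ = 0 := by
    unfold mix
    refine Finset.sum_eq_zero fun x _ => ?_
    split_ifs with hcond
    · obtain ⟨h1, h2, h3⟩ := hcond
      unfold constr
      split_ifs with hx2
      · exfalso
        have hval : clauseVal R x.1 i₀ = true := by
          rw [hx2] at h3; exact h3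
        have heq : ∀ j : Fin 3, x.1 (R i₀ j).1 = t (R i₀ j).1 := by
          intro j
          have hmem : (R i₀ j).1 ∈ G := by
            rw [hG]
            exact Finset.mem_image.mpr ⟨j, Finset.mem_univ j, rfl⟩
          cases htj : t (R i₀ j).1 with
          | true => exact h1 _ (Finset.mem_filter.mpr ⟨hmem, htj⟩)
          | false => exact h2 _ (Finset.mem_filter.mpr ⟨hmem, htj⟩)
        have hsat : clauseVal R t i₀ = true := by
          unfold clauseVal at hval ⊢
          simp only [decide_eq_true_eq] at hval ⊢
          obtain ⟨j, hj⟩ := hval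
          exact ⟨j, (heq j).symm.trans hj⟩
        rw [hi₀'] at hsat
        exact absurd hsat (by simp)
      · rfl
    · rfl
  have hq0 : mix q A F i₀ = 0 := by
    rw [mix_agree R q i₀ (fun S hS => hagree i₀ S {i₀} hS (subset_refl _)) F A hdisj
      (by rw [hunion])]
    exact hc0
  have hle : (∑ x : (Fin L → Bool) × (Fin M → Bool),
      if x.1 = t ∧ (∀ i, x.2 i = true) then q x else 0) ≤ mix q A F i₀ := by
    unfold mix
    refine Finset.sum_le_sum fun x _ => ?_
    split_ifs with h1 h2
    · exact le_refl _
    · exfalso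
      apply h2
      obtain ⟨hx1, hx2⟩ := h1
      refine ⟨?_, ?_, hx2 i₀⟩
      · intro i hi
        rw [hx1]
        exact (Finset.mem_filter.mp hi).2
      · intro i hi
        rw [hx1]
        exact (Finset.mem_filter.mp hi).2
    · exact hq.1 x
    · exact le_refl _
  have hge : (0:ℝ) ≤ ∑ x : (Fin L → Bool) × (Fin M → Bool),
      if x.1 = t ∧ (∀ i, x.2 i = true) then q x else 0 :=
    Finset.sum_nonneg fun x _ => by split_ifs; exacts [hq.1 x, le_refl 0]
  linarith
end
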